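/- arXiv:2108.05703 — 3 statements merged into one kernel-verified Lean document; each statement's English description precedes it below -/
import Mathlib

section
/- Let M be the closed subspace of H ⊕ ℂ spanned by (ξ, 0) and (0, 1) (i.e. M = ⟨ξ⟩ ⊕ ℂ). Then M and its orthogonal complement M⊥ are both invariant under T if and only if there exists r ∈ ℂ with |r| = 1 and U ξ = r·ξ; in that case T restricted to M⊥ coincides with the action of U on the orthogonal complement of ξ in H. -/
/-!
On the generators of `M`, `T (0, 1) = (U ξ, a)` and, since `A ξ = a ξ`, `T (ξ, 0) = (a U ξ, ‖ξ‖²)`;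
so `M` is invariant exactly when `U ξ ∈ ℂ ξ`, and an eigenvalue of a unitary has modulus one.
The complement `Mᗮ` consists of the `(y, 0)` with `y ⊥ ξ`, on which `A` is the identity, so
`T (y, 0) = (U y, 0)`; this stays in `Mᗮ` because a unitary with eigenvector `ξ` preserves `ξᗮ`.
-/

open scoped InnerProductSpace

noncomputable section

variable {H : Type*} [NormedAddCommGroup H] [InnerProductSpace ℂ H]

/-- The vector `(x, z)` of the Hilbert space direct sum `H ⊕ ℂ`. -/
def mkE (x : H) (z : ℂ) : WithLp 2 (H × ℂ) := (WithLp.equiv 2 (H × ℂ)).symm (x, z)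

/-- The subspace `⟨ξ⟩ ⊕ ℂ` of `H ⊕ ℂ`, spanned by `(ξ,0)` and `(0,1)`. -/
def spanXiC (ξ : H) : Submodule ℂ (WithLp 2 (H × ℂ)) :=
  Submodule.span ℂ ({mkE ξ 0, mkE 0 1} : Set (WithLp 2 (H × ℂ)))

section Unitary

variable {𝕜 E : Type*} [RCLike 𝕜] [NormedAddCommGroup E] [InnerProductSpace 𝕜 E] [CompleteSpace E]
  {U : E →L[𝕜] E} {x y : E} {r : 𝕜}

lemma norm_eq_one_of_apply_eq_smul (hU : U ∈ unitary (E →L[𝕜] E)) (hx : x ≠ 0)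
    (h : U x = r • x) : ‖r‖ = 1 := by
  have hnorm : ‖r‖ * ‖x‖ = 1 * ‖x‖ := by
    rw [← norm_smul, ← h, U.norm_map_of_mem_unitary hU, one_mul]
  exact mul_right_cancel₀ (norm_ne_zero_iff.mpr hx) hnorm

lemma inner_apply_eq_zero_of_apply_eq_smul (hU : U ∈ unitary (E →L[𝕜] E)) (hr : r ≠ 0)
    (h : U x = r • x) (hy : ⟪x, y⟫_𝕜 = 0) : ⟪x, U y⟫_𝕜 = 0 := by
  have hinner : ⟪U x, U y⟫_𝕜 = ⟪x, y⟫_𝕜 := U.inner_map_map_of_mem_unitary hU x y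
  rw [h, inner_smul_left, hy, mul_eq_zero] at hinner
  exact hinner.resolve_left (by simpa using hr)

end Unitary

section DirectSum

variable {ξ x : H} {z : ℂ}

lemma mkE_mem_spanXiC_iff : mkE x z ∈ spanXiC ξ ↔ x ∈ ℂ ∙ ξ := by
  simp [spanXiC, Submodule.mem_span_pair, Submodule.mem_span_singleton, mkE, ← WithLp.toLp_smul,
    ← WithLp.toLp_add]

lemma mem_orthogonal_spanXiC_iff (v : WithLp 2 (H × ℂ)) :
    v ∈ (spanXiC ξ)ᗮ ↔ ∃ y, ⟪ξ, y⟫_ℂ = 0 ∧ mkE y 0 = v := by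
  rw [← Submodule.span_singleton_le_iff_mem, ← Submodule.isOrtho_iff_le, spanXiC,
    Submodule.isOrtho_span]
  obtain ⟨x, z⟩ := v
  simp [mkE, WithLp.prod_inner_apply, inner_eq_zero_symm, eq_comm (a := (0 : ℂ))]

lemma forall_mem_spanXiC_apply_mem_iff (T : WithLp 2 (H × ℂ) →L[ℂ] WithLp 2 (H × ℂ)) :
    (∀ v ∈ spanXiC ξ, T v ∈ spanXiC ξ) ↔
      T (mkE ξ 0) ∈ spanXiC ξ ∧ T (mkE 0 1) ∈ spanXiC ξ := by
  have := Submodule.span_le (s := {mkE ξ 0, mkE 0 1})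
    (p := (spanXiC ξ).comap (T : WithLp 2 (H × ℂ) →ₗ[ℂ] WithLp 2 (H × ℂ)))
  exact this.trans Set.pair_subset_iff

end DirectSum

section Operators

variable {ξ y : H} {a : ℝ} {A : H → H} {U : H →L[ℂ] H} {T : WithLp 2 (H × ℂ) → WithLp 2 (H × ℂ)}

lemma apply_eq_self_of_inner_eq_zero
    (hA : ∀ x : H, A x = x + ((((a - 1) / ‖ξ‖ ^ 2 : ℝ) : ℂ) * ⟪ξ, x⟫_ℂ) • ξ)
    (hy : ⟪ξ, y⟫_ℂ = 0) : A y = y := by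
  rw [hA, hy, mul_zero, zero_smul, add_zero]

lemma apply_self_eq_smul (hξ : ξ ≠ 0)
    (hA : ∀ x : H, A x = x + ((((a - 1) / ‖ξ‖ ^ 2 : ℝ) : ℂ) * ⟪ξ, x⟫_ℂ) • ξ) :
    A ξ = (a : ℂ) • ξ := by
  have hnorm : (‖ξ‖ : ℂ) ≠ 0 := by simpa using hξ
  rw [hA, inner_self_eq_norm_sq_to_K]
  match_scalars
  field_simp
  simp only [RCLike.ofReal_eq_complex_ofReal]
  ring

lemma apply_mkE_of_inner_eq_zero
    (hA : ∀ x : H, A x = x + ((((a - 1) / ‖ξ‖ ^ 2 : ℝ) : ℂ) * ⟪ξ, x⟫_ℂ) • ξ)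
    (hT : ∀ x z, T (mkE x z) = mkE (U (A x) + z • U ξ) (⟪ξ, x⟫_ℂ + (a : ℂ) * z))
    (hy : ⟪ξ, y⟫_ℂ = 0) : T (mkE y 0) = mkE (U y) 0 := by
  rw [hT, apply_eq_self_of_inner_eq_zero hA hy, hy]
  simp

lemma apply_mkE_zero_one
    (hA : ∀ x : H, A x = x + ((((a - 1) / ‖ξ‖ ^ 2 : ℝ) : ℂ) * ⟪ξ, x⟫_ℂ) • ξ)
    (hT : ∀ x z, T (mkE x z) = mkE (U (A x) + z • U ξ) (⟪ξ, x⟫_ℂ + (a : ℂ) * z)) :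
    T (mkE 0 1) = mkE (U ξ) a := by
  rw [hT, apply_eq_self_of_inner_eq_zero hA (inner_zero_right ξ)]
  simp

lemma apply_mkE_self_zero (hξ : ξ ≠ 0)
    (hA : ∀ x : H, A x = x + ((((a - 1) / ‖ξ‖ ^ 2 : ℝ) : ℂ) * ⟪ξ, x⟫_ℂ) • ξ)
    (hT : ∀ x z, T (mkE x z) = mkE (U (A x) + z • U ξ) (⟪ξ, x⟫_ℂ + (a : ℂ) * z)) :
    T (mkE ξ 0) = mkE ((a : ℂ) • U ξ) ((‖ξ‖ : ℂ) ^ 2) := by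
  rw [hT, apply_self_eq_smul hξ hA, inner_self_eq_norm_sq_to_K]
  simp

end Operators

theorem stmt6_general [CompleteSpace H]
    (ξ : H) (hξ : ξ ≠ 0) (a : ℝ)
    (A : H →L[ℂ] H)
    (hA : ∀ x : H, A x = x + ((((a - 1) / ‖ξ‖ ^ 2 : ℝ) : ℂ) * ⟪ξ, x⟫_ℂ) • ξ)
    (U : H →L[ℂ] H) (hU : U ∈ unitary (H →L[ℂ] H))
    (T : WithLp 2 (H × ℂ) →L[ℂ] WithLp 2 (H × ℂ))
    (hT : ∀ (x : H) (z : ℂ),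
      T (mkE x z) = mkE (U (A x) + z • U ξ) (⟪ξ, x⟫_ℂ + (a : ℂ) * z)) :
    (((∀ v ∈ spanXiC ξ, T v ∈ spanXiC ξ) ∧ ∀ v ∈ (spanXiC ξ)ᗮ, T v ∈ (spanXiC ξ)ᗮ) ↔
        ∃ r : ℂ, ‖r‖ = 1 ∧ U ξ = r • ξ) ∧
      ((∃ r : ℂ, ‖r‖ = 1 ∧ U ξ = r • ξ) →
        ∀ y : H, ⟪ξ, y⟫_ℂ = 0 → T (mkE y 0) = mkE (U y) 0) := by
  have hTy (y : H) (hy : ⟪ξ, y⟫_ℂ = 0) : T (mkE y 0) = mkE (U y) 0 :=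
    apply_mkE_of_inner_eq_zero hA hT hy
  refine ⟨⟨fun hM => ?_, fun ⟨r, hr, hUξ⟩ => ⟨?_, ?_⟩⟩, fun _ => hTy⟩
  · have hUξ := ((forall_mem_spanXiC_apply_mem_iff T).1 hM.1).2
    rw [apply_mkE_zero_one hA hT, mkE_mem_spanXiC_iff, Submodule.mem_span_singleton] at hUξ
    obtain ⟨r, hr⟩ := hUξ
    exact ⟨r, norm_eq_one_of_apply_eq_smul hU hξ hr.symm, hr.symm⟩
  · rw [forall_mem_spanXiC_apply_mem_iff, apply_mkE_self_zero hξ hA hT, apply_mkE_zero_one hA hT,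
      hUξ, smul_smul, mkE_mem_spanXiC_iff, mkE_mem_spanXiC_iff]
    exact ⟨Submodule.smul_mem _ _ (Submodule.mem_span_singleton_self ξ),
      Submodule.smul_mem _ _ (Submodule.mem_span_singleton_self ξ)⟩
  · have hr0 : r ≠ 0 := ne_zero_of_norm_ne_zero (hr ▸ one_ne_zero)
    intro v hv
    obtain ⟨y, hy, rfl⟩ := (mem_orthogonal_spanXiC_iff v).1 hv
    rw [hTy y hy, mem_orthogonal_spanXiC_iff]
    exact ⟨U y, inner_apply_eq_zero_of_apply_eq_smul hU hr0 hUξ hy, rfl⟩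

/-- With `ξ ≠ 0`, `a = √(1 + ‖ξ‖²)`, `A x = x + ((a−1)/‖ξ‖²)·⟨x,ξ⟩·ξ`, `U` unitary, and
`T(x,z) = (U(A x) + z·U ξ, ⟨x,ξ⟩ + a·z)`: the subspace `M = ⟨ξ⟩ ⊕ ℂ` and its orthogonal
complement are both invariant under `T` iff `U ξ = r·ξ` for some `r` with `|r| = 1`; and in
that case `T` restricted to `Mᗮ` is the action of `U` on `⟨ξ⟩ᗮ ⊆ H`.
(The paper's inner product `⟨x,y⟩` is linear in the first slot, i.e. `⟪y,x⟫_ℂ` in Mathlib's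
convention.) -/
theorem stmt6 [CompleteSpace H]
    (ξ : H) (hξ : ξ ≠ 0) (a : ℝ) (ha : a = Real.sqrt (1 + ‖ξ‖ ^ 2))
    (A : H →L[ℂ] H)
    (hA : ∀ x : H, A x = x + ((((a - 1) / ‖ξ‖ ^ 2 : ℝ) : ℂ) * ⟪ξ, x⟫_ℂ) • ξ)
    (U : H →L[ℂ] H) (hU : U ∈ unitary (H →L[ℂ] H))
    (T : WithLp 2 (H × ℂ) →L[ℂ] WithLp 2 (H × ℂ))
    (hT : ∀ (x : H) (z : ℂ),
      T (mkE x z) = mkE (U (A x) + z • U ξ) (⟪ξ, x⟫_ℂ + (a : ℂ) * z)) :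
    (((∀ v ∈ spanXiC ξ, T v ∈ spanXiC ξ) ∧ ∀ v ∈ (spanXiC ξ)ᗮ, T v ∈ (spanXiC ξ)ᗮ) ↔
        ∃ r : ℂ, ‖r‖ = 1 ∧ U ξ = r • ξ) ∧
      ((∃ r : ℂ, ‖r‖ = 1 ∧ U ξ = r • ξ) →
        ∀ y : H, ⟪ξ, y⟫_ℂ = 0 → T (mkE y 0) = mkE (U y) 0) :=
  stmt6_general ξ hξ a A hA U hU T hT

end
end

section
/- The operator T_θ on H ⊕ ℂ is normal (i.e. commutes with its Hilbert-space adjoint, T_θ* ∘ T_θ = T_θ ∘ T_θ*) if and only if U ξ = ξ. -/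
/-!
`A` is the positive square root of `1 + ξ ⟪ξ, ·⟫`, and `ξ` is an eigenvector of `A` with
eigenvalue `a`. With these two facts a direct computation gives `T* T (x, z) = G_ξ (x, z)` and
`T T* (y, w) = G_{Uξ} (y, w)`, where
`G_η (x, z) = (x + (2⟪η, x⟫ + 2az) η, 2a⟪η, x⟫ + (a² + ‖η‖²) z)`.
Hence `T` is normal iff `G_ξ = G_{Uξ}`, and evaluating at `(0, 1)` gives `2a ξ = 2a Uξ`.
-/

open scoped InnerProductSpace

noncomputable section

variable {H : Type*} [NormedAddCommGroup H] [InnerProductSpace ℂ H]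

open ContinuousLinearMap

theorem inner_mkE_mkE (x y : H) (z w : ℂ) :
    ⟪mkE x z, mkE y w⟫_ℂ = ⟪x, y⟫_ℂ + starRingEnd ℂ z * w := by
  simp [mkE, WithLp.prod_inner_apply, mul_comm]

omit [NormedAddCommGroup H] [InnerProductSpace ℂ H] in
theorem mkE_ofLp (v : WithLp 2 (H × ℂ)) : mkE v.ofLp.1 v.ofLp.2 = v := rfl

section Unitary

variable [CompleteSpace H] {U : H →L[ℂ] H}

theorem adjoint_apply_apply_of_mem_unitary (hU : U ∈ unitary (H →L[ℂ] H)) (x : H) :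
    adjoint U (U x) = x := by
  simpa [star_eq_adjoint] using congr($(Unitary.star_mul_self_of_mem hU) x)

theorem apply_adjoint_apply_of_mem_unitary (hU : U ∈ unitary (H →L[ℂ] H)) (x : H) :
    U (adjoint U x) = x := by
  simpa [star_eq_adjoint] using congr($(Unitary.mul_star_self_of_mem hU) x)

end Unitary

theorem inner_eigenvector_apply_of_isSymmetric {A : H →L[ℂ] H}
    (hA : (A : H →ₗ[ℂ] H).IsSymmetric) {ξ : H} {a : ℝ} (hAξ : A ξ = (a : ℂ) • ξ) (x : H) :
    ⟪ξ, A x⟫_ℂ = a * ⟪ξ, x⟫_ℂ := by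
  rw [← coe_coe, ← hA, coe_coe, hAξ, inner_smul_left, Complex.conj_ofReal]

section RankOnePerturbation

variable {ξ : H} {a : ℝ} {A : H →L[ℂ] H}
  (hA : ∀ x : H, A x = x + ((((a - 1) / ‖ξ‖ ^ 2 : ℝ) : ℂ) * ⟪ξ, x⟫_ℂ) • ξ)
include hA

theorem isSymmetric_of_rankOne_perturbation : (A : H →ₗ[ℂ] H).IsSymmetric := by
  intro x y
  simp only [coe_coe, hA, inner_add_left, inner_add_right, inner_smul_left, inner_smul_right,
    map_mul, inner_conj_symm, Complex.conj_ofReal]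
  ring

theorem apply_self_of_rankOne_perturbation (hξ : ξ ≠ 0) : A ξ = (a : ℂ) • ξ := by
  set c : ℝ := (a - 1) / ‖ξ‖ ^ 2
  have hc : (c : ℂ) * ‖ξ‖ ^ 2 = a - 1 := mod_cast div_mul_cancel₀ _ (by positivity)
  rw [hA, inner_self_eq_norm_sq_to_K]
  match_scalars
  linear_combination hc

theorem apply_apply_of_rankOne_perturbation (hξ : ξ ≠ 0) (ha : a ^ 2 = 1 + ‖ξ‖ ^ 2) (x : H) :
    A (A x) = x + ⟪ξ, x⟫_ℂ • ξ := by
  set c : ℝ := (a - 1) / ‖ξ‖ ^ 2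
  -- the two perturbations `c ξ ⟪ξ, ·⟫` and `c a ξ ⟪ξ, ·⟫` add up to `ξ ⟪ξ, ·⟫`
  have hc : (c : ℂ) * (a + 1) = 1 := by
    norm_cast
    rw [div_mul_eq_mul_div, div_eq_one_iff_eq (by positivity)]
    linear_combination ha
  rw [hA (A x), inner_eigenvector_apply_of_isSymmetric (isSymmetric_of_rankOne_perturbation hA)
    (apply_self_of_rankOne_perturbation hA hξ), hA x]
  match_scalars
  · ring
  · linear_combination ⟪ξ, x⟫_ℂ * hc

end RankOnePerturbation

def gramForm (a : ℝ) (η x : H) (z : ℂ) : WithLp 2 (H × ℂ) :=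
  mkE (x + (2 * ⟪η, x⟫_ℂ + 2 * a * z) • η) (2 * a * ⟪η, x⟫_ℂ + ((a : ℂ) ^ 2 + ⟪η, η⟫_ℂ) * z)

theorem eq_of_gramForm_eq {a : ℝ} (ha : a ≠ 0) {η η' : H}
    (h : gramForm a η 0 1 = gramForm a η' 0 1) : η = η' := by
  have h₁ : ((2 * a : ℝ) : ℂ) • η = ((2 * a : ℝ) : ℂ) • η' := by
    simpa [gramForm, mkE] using congr(($h).ofLp.1)
  exact smul_right_injective H (by exact_mod_cast mul_ne_zero two_ne_zero ha) h₁

section BlockOperator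

variable [CompleteSpace H] {ξ : H} {a : ℝ} {A U : H →L[ℂ] H} {c : ℂ}
  {T : WithLp 2 (H × ℂ) →L[ℂ] WithLp 2 (H × ℂ)}
  (hT : ∀ x z, T (mkE x z) = c • mkE (U (A x) + z • U ξ) (⟪ξ, x⟫_ℂ + (a : ℂ) * z))
include hT

theorem adjoint_apply_mkE (hA : (A : H →ₗ[ℂ] H).IsSymmetric) (y : H) (w : ℂ) :
    adjoint T (mkE y w) =
      starRingEnd ℂ c • mkE (A (adjoint U y) + w • ξ) (⟪U ξ, y⟫_ℂ + a * w) := by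
  have hUA : ∀ x, ⟪y, U (A x)⟫_ℂ = ⟪A (adjoint U y), x⟫_ℂ := fun x => by
    rw [← adjoint_inner_left]
    exact (hA _ _).symm
  refine ext_inner_right ℂ fun v => ?_
  rw [adjoint_inner_left, ← mkE_ofLp v, hT, inner_smul_right, inner_smul_left, inner_mkE_mkE,
    inner_mkE_mkE, RCLike.conj_conj]
  simp only [inner_add_left, inner_add_right, inner_smul_left, inner_smul_right, map_add, map_mul,
    inner_conj_symm, Complex.conj_ofReal, hUA]
  ring

variable (hU : U ∈ unitary (H →L[ℂ] H)) (hc : starRingEnd ℂ c * c = 1)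
  (hA : (A : H →ₗ[ℂ] H).IsSymmetric) (hAξ : A ξ = (a : ℂ) • ξ)
  (hA2 : ∀ x, A (A x) = x + ⟪ξ, x⟫_ℂ • ξ)
include hU hc hA hAξ hA2

theorem adjoint_comp_apply_mkE (x : H) (z : ℂ) :
    (adjoint T ∘L T) (mkE x z) = gramForm a ξ x z := by
  rw [comp_apply, hT, map_smul, adjoint_apply_mkE hT hA, smul_smul, mul_comm, hc, one_smul]
  simp only [map_add, map_smul, adjoint_apply_apply_of_mem_unitary hU, inner_add_right,
    inner_smul_right, inner_map_map_of_mem_unitary hU, hA2, hAξ,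
    inner_eigenvector_apply_of_isSymmetric hA hAξ]
  unfold gramForm
  congr 1
  · module
  · ring

theorem comp_adjoint_apply_mkE (y : H) (w : ℂ) :
    (T ∘L adjoint T) (mkE y w) = gramForm a (U ξ) y w := by
  rw [comp_apply, adjoint_apply_mkE hT hA, map_smul, hT, smul_smul, hc, one_smul]
  simp only [map_add, map_smul, apply_adjoint_apply_of_mem_unitary hU, inner_add_right,
    inner_smul_right, hA2, hAξ, inner_eigenvector_apply_of_isSymmetric hA hAξ,
    adjoint_inner_right]
  unfold gramForm
  congr 1
  · module
  · rw [inner_map_map_of_mem_unitary hU]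
    ring

end BlockOperator

/-- The paper's inner product `⟨x,y⟩` is linear in the first slot, i.e. `⟪y,x⟫_ℂ` in Mathlib's
convention. -/
theorem stmt10 [CompleteSpace H]
    (ξ : H) (hξ : ξ ≠ 0) (a : ℝ) (ha : a = Real.sqrt (1 + ‖ξ‖ ^ 2))
    (A : H →L[ℂ] H)
    (hA : ∀ x : H, A x = x + ((((a - 1) / ‖ξ‖ ^ 2 : ℝ) : ℂ) * ⟪ξ, x⟫_ℂ) • ξ)
    (U : H →L[ℂ] H) (hU : U ∈ unitary (H →L[ℂ] H)) (θ : ℝ)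
    (T : WithLp 2 (H × ℂ) →L[ℂ] WithLp 2 (H × ℂ))
    (hT : ∀ (x : H) (z : ℂ),
      T (mkE x z) =
        Complex.exp (θ * Complex.I) • mkE (U (A x) + z • U ξ) (⟪ξ, x⟫_ℂ + (a : ℂ) * z)) :
    ContinuousLinearMap.adjoint T ∘L T = T ∘L ContinuousLinearMap.adjoint T ↔ U ξ = ξ := by
  have ha₀ : a ≠ 0 := by rw [ha]; positivity
  have ha₂ : a ^ 2 = 1 + ‖ξ‖ ^ 2 := by rw [ha, Real.sq_sqrt (by positivity)]
  have hc : starRingEnd ℂ (Complex.exp (θ * Complex.I)) * Complex.exp (θ * Complex.I) = 1 := by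
    rw [Complex.conj_mul', Complex.norm_exp_ofReal_mul_I, Complex.ofReal_one, one_pow]
  have hAs := isSymmetric_of_rankOne_perturbation hA
  have hAξ := apply_self_of_rankOne_perturbation hA hξ
  have hA2 := apply_apply_of_rankOne_perturbation hA hξ ha₂
  have hTT := adjoint_comp_apply_mkE hT hU hc hAs hAξ hA2
  have hTT' := comp_adjoint_apply_mkE hT hU hc hAs hAξ hA2
  constructor
  · intro h
    exact (eq_of_gramForm_eq ha₀ (by rw [← hTT, ← hTT', h])).symm
  · intro h
    refine ContinuousLinearMap.ext fun v => ?_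
    rw [← mkE_ofLp v, hTT, hTT', h]

end
end

section
/- Let V be a unitary operator on H and let D_V be the unitary operator on H ⊕ ℂ given by D_V(x,z) = (V x, z). Then D_V⁻¹ ∘ T_θ ∘ D_V = T_θ⁻¹ if and only if V⁻¹ ∘ (U ∘ A) ∘ V = (U ∘ A)* (the Hilbert adjoint of U ∘ A), V ξ = −U ξ, V⁻¹ ξ = −U ξ, and exp(iθ) ∈ {1, −1}. -/
/-!
`A` is self-adjoint with `A ξ = a ξ` and, because `a² = 1 + ‖ξ‖²`, `A² = 1 + |ξ⟩⟨ξ|`. This makes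
the inverse explicit: `T_θ⁻¹(x, z) = e^{-iθ} ((UA)* x − z ξ, ⟪−U ξ, x⟫ + a z)`. Both
`D_V⁻¹ T_θ D_V` and `T_θ⁻¹` have the shape `(x, z) ↦ e (P x + z u, f x + a z)`, and two such maps
agree iff their data `(P, u, f, e)` agree (evaluate at `(0, 1)`, then at `(x, 0)`). Matching the
data gives `V⁻¹ (UA) V = (UA)*`, `V⁻¹ U ξ = −ξ`, `V* ξ = −U ξ` and `e^{iθ} = e^{−iθ}`.
-/

open scoped InnerProductSpace

noncomputable section

variable {H : Type*} [NormedAddCommGroup H] [InnerProductSpace ℂ H]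

open ContinuousLinearMap

theorem smul_mkE (c : ℂ) (x : H) (z : ℂ) : c • mkE x z = mkE (c • x) (c * z) := rfl

omit [NormedAddCommGroup H] [InnerProductSpace ℂ H] in
theorem mkE_eq_mkE_iff {x y : H} {z w : ℂ} : mkE x z = mkE y w ↔ x = y ∧ z = w :=
  ⟨fun h => ⟨congrArg (fun v => v.ofLp.1) h, congrArg (fun v => v.ofLp.2) h⟩,
    fun ⟨hx, hz⟩ => hx ▸ hz ▸ rfl⟩

theorem ext_mkE_iff {f g : WithLp 2 (H × ℂ) →L[ℂ] WithLp 2 (H × ℂ)} :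
    f = g ↔ ∀ x z, f (mkE x z) = g (mkE x z) :=
  ⟨fun h _ _ => h ▸ rfl, fun h => ext fun v => h v.ofLp.1 v.ofLp.2⟩

theorem forall_smul_mkE_eq_iff {e e' a : ℂ} (he : e ≠ 0) (ha : a ≠ 0) {P Q : H →L[ℂ] H}
    {u v : H} {f g : H →L[ℂ] ℂ} :
    (∀ x z, e • mkE (P x + z • u) (f x + a * z) = e' • mkE (Q x + z • v) (g x + a * z)) ↔
      P = Q ∧ u = v ∧ f = g ∧ e = e' := by
  constructor
  · intro h
    have h01 := h 0 1
    simp only [map_zero, zero_add, one_smul, mul_one, smul_mkE, mkE_eq_mkE_iff] at h01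
    obtain rfl : e = e' := mul_right_cancel₀ ha h01.2
    have hx0 (x : H) : e • P x = e • Q x ∧ e * f x = e * g x := by
      simpa only [zero_smul, add_zero, mul_zero, smul_mkE, mkE_eq_mkE_iff] using h x 0
    exact ⟨ext fun x => smul_right_injective H he (hx0 x).1, smul_right_injective H he h01.1,
      ext fun x => mul_left_cancel₀ he (hx0 x).2, rfl⟩
  · rintro ⟨rfl, rfl, rfl, rfl⟩ _ _
    rfl

theorem Complex.exp_eq_exp_neg_iff (w : ℂ) :
    exp w = exp (-w) ↔ exp w = 1 ∨ exp w = -1 := by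
  rw [← mul_self_eq_one_iff, exp_neg, mul_eq_one_iff_eq_inv₀ (exp_ne_zero w)]

namespace RankOnePerturbation

variable {ξ : H} {a : ℝ} {A : H →L[ℂ] H}

theorem coeff_mul_inner_self (hξ : ξ ≠ 0) :
    (((a - 1) / ‖ξ‖ ^ 2 : ℝ) : ℂ) * ⟪ξ, ξ⟫_ℂ = a - 1 := by
  have : (a - 1) / ‖ξ‖ ^ 2 * ‖ξ‖ ^ 2 = a - 1 :=
    div_mul_cancel₀ _ (pow_ne_zero 2 (norm_ne_zero_iff.2 hξ))
  rw [inner_self_eq_norm_sq_to_K]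
  -- the `RCLike` coercion of `‖ξ‖` must become `Complex.ofReal` before `norm_cast` can see it
  change _ * ((‖ξ‖ : ℝ) : ℂ) ^ 2 = _
  exact_mod_cast this

theorem adjoint_eq_self [CompleteSpace H]
    (hA : ∀ x : H, A x = x + ((((a - 1) / ‖ξ‖ ^ 2 : ℝ) : ℂ) * ⟪ξ, x⟫_ℂ) • ξ) :
    adjoint A = A := by
  refine ((eq_adjoint_iff A A).2 fun x y => ?_).symm
  rw [hA x, hA y, inner_add_left, inner_add_right, inner_smul_left, inner_smul_right, map_mul,
    Complex.conj_ofReal, inner_conj_symm]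
  ring

theorem apply_self (hξ : ξ ≠ 0)
    (hA : ∀ x : H, A x = x + ((((a - 1) / ‖ξ‖ ^ 2 : ℝ) : ℂ) * ⟪ξ, x⟫_ℂ) • ξ) :
    A ξ = (a : ℂ) • ξ := by
  rw [hA, coeff_mul_inner_self hξ]
  module

theorem inner_apply (hξ : ξ ≠ 0)
    (hA : ∀ x : H, A x = x + ((((a - 1) / ‖ξ‖ ^ 2 : ℝ) : ℂ) * ⟪ξ, x⟫_ℂ) • ξ) (x : H) :
    ⟪ξ, A x⟫_ℂ = a * ⟪ξ, x⟫_ℂ := by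
  rw [hA, inner_add_right, inner_smul_right, mul_right_comm, coeff_mul_inner_self hξ]
  ring

theorem apply_apply (hξ : ξ ≠ 0) (ha : a ^ 2 = 1 + ‖ξ‖ ^ 2)
    (hA : ∀ x : H, A x = x + ((((a - 1) / ‖ξ‖ ^ 2 : ℝ) : ℂ) * ⟪ξ, x⟫_ℂ) • ξ) (x : H) :
    A (A x) = x + ⟪ξ, x⟫_ℂ • ξ := by
  have hn : (‖ξ‖ : ℂ) ≠ 0 := by exact_mod_cast norm_ne_zero_iff.2 hξ
  have hc : ((a : ℂ) - 1) / (‖ξ‖ : ℂ) ^ 2 * (1 + a) = 1 := by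
    field_simp
    linear_combination (by exact_mod_cast ha : (a : ℂ) ^ 2 = 1 + (‖ξ‖ : ℂ) ^ 2)
  rw [hA (A x), inner_apply hξ hA, hA x]
  match_scalars
  · ring
  · linear_combination ⟪ξ, x⟫_ℂ * hc

end RankOnePerturbation

theorem leftInverse_apply_mkE [CompleteSpace H] {ξ : H} (hξ : ξ ≠ 0) {a : ℝ}
    (ha : a ^ 2 = 1 + ‖ξ‖ ^ 2) {A U : H →L[ℂ] H}
    (hA : ∀ x : H, A x = x + ((((a - 1) / ‖ξ‖ ^ 2 : ℝ) : ℂ) * ⟪ξ, x⟫_ℂ) • ξ)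
    (hU : U ∘L adjoint U = 1) {θ : ℝ} {T Tinv : WithLp 2 (H × ℂ) →L[ℂ] WithLp 2 (H × ℂ)}
    (hT : ∀ (x : H) (z : ℂ),
      T (mkE x z) =
        Complex.exp (θ * Complex.I) • mkE (U (A x) + z • U ξ) (⟪ξ, x⟫_ℂ + (a : ℂ) * z))
    (hTinv : Tinv ∘L T = 1) (x : H) (z : ℂ) :
    Tinv (mkE x z) = Complex.exp (-(θ * Complex.I)) •
      mkE (adjoint (U ∘L A) x + z • -ξ) (innerSL ℂ (-(U ξ)) x + a * z) := by
  have hUU (y : H) : U (adjoint U y) = y := congrArg (· y) hU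
  have hinner : innerSL ℂ (-(U ξ)) x = -⟪ξ, adjoint U x⟫_ℂ := by
    rw [innerSL_apply_apply, inner_neg_left, adjoint_inner_right]
  rw [adjoint_comp, RankOnePerturbation.adjoint_eq_self hA, hinner, comp_apply]
  set w := Complex.exp (-(θ * Complex.I)) •
    mkE (A (adjoint U x) + z • -ξ) (-⟪ξ, adjoint U x⟫_ℂ + a * z)
  have hTw : T w = mkE x z := by
    rw [map_smul, hT, smul_smul, ← Complex.exp_add, neg_add_cancel, Complex.exp_zero, one_smul]
    congr 1
    · rw [map_add, map_smul, map_neg, RankOnePerturbation.apply_apply hξ ha hA,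
        RankOnePerturbation.apply_self hξ hA]
      simp only [map_add, map_smul, map_neg, hUU]
      module
    · rw [inner_add_right, inner_smul_right, inner_neg_right, RankOnePerturbation.inner_apply hξ hA,
        inner_self_eq_norm_sq_to_K]
      linear_combination z * (by exact_mod_cast ha : (a : ℂ) ^ 2 = 1 + (‖ξ‖ : ℂ) ^ 2)
  rw [← hTw]
  exact DFunLike.congr_fun hTinv w

/-- The paper's inner product `⟨x,y⟩` is linear in the first slot, i.e. `⟪y,x⟫_ℂ` in Mathlib's
convention. -/
theorem stmt17 [CompleteSpace H]
    (ξ : H) (hξ : ξ ≠ 0) (a : ℝ) (ha : a = Real.sqrt (1 + ‖ξ‖ ^ 2))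
    (A : H →L[ℂ] H)
    (hA : ∀ x : H, A x = x + ((((a - 1) / ‖ξ‖ ^ 2 : ℝ) : ℂ) * ⟪ξ, x⟫_ℂ) • ξ)
    (U : H →L[ℂ] H) (hU : U ∈ unitary (H →L[ℂ] H)) (θ : ℝ)
    (T : WithLp 2 (H × ℂ) →L[ℂ] WithLp 2 (H × ℂ))
    (hT : ∀ (x : H) (z : ℂ),
      T (mkE x z) =
        Complex.exp (θ * Complex.I) • mkE (U (A x) + z • U ξ) (⟪ξ, x⟫_ℂ + (a : ℂ) * z))
    (Tinv : WithLp 2 (H × ℂ) →L[ℂ] WithLp 2 (H × ℂ))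
    (hTinv : Tinv ∘L T = 1 ∧ T ∘L Tinv = 1)
    (V : H →L[ℂ] H) (hV : V ∈ unitary (H →L[ℂ] H))
    (Vinv : H →L[ℂ] H) (hVinv : Vinv ∘L V = 1 ∧ V ∘L Vinv = 1)
    (D : WithLp 2 (H × ℂ) →L[ℂ] WithLp 2 (H × ℂ))
    (hD : ∀ (x : H) (z : ℂ), D (mkE x z) = mkE (V x) z)
    (Dinv : WithLp 2 (H × ℂ) →L[ℂ] WithLp 2 (H × ℂ))
    (hDinv : ∀ (x : H) (z : ℂ), Dinv (mkE x z) = mkE (Vinv x) z) :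
    Dinv ∘L T ∘L D = Tinv ↔
      Vinv ∘L (U ∘L A) ∘L V = ContinuousLinearMap.adjoint (U ∘L A) ∧
        V ξ = -(U ξ) ∧ Vinv ξ = -(U ξ) ∧
        (Complex.exp (θ * Complex.I) = 1 ∨ Complex.exp (θ * Complex.I) = -1) := by
  have ha2 : a ^ 2 = 1 + ‖ξ‖ ^ 2 := by rw [ha, Real.sq_sqrt (by positivity)]
  have ha0 : (a : ℂ) ≠ 0 := by rw [ha]; exact_mod_cast (Real.sqrt_pos.2 (by positivity)).ne'
  have hUU : U ∘L adjoint U = 1 := by rw [← star_eq_adjoint]; exact hU.2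
  have hVadj : adjoint V = Vinv :=
    (left_inv_eq_right_inv hVinv.1 (by rw [← star_eq_adjoint]; exact hV.2)).symm
  have hconj (x : H) (z : ℂ) : (Dinv ∘L T ∘L D) (mkE x z) = Complex.exp (θ * Complex.I) •
      mkE ((Vinv ∘L (U ∘L A) ∘L V) x + z • Vinv (U ξ)) ((innerSL ℂ ξ ∘L V) x + a * z) := by
    simp only [comp_apply, hD, hT, map_smul, hDinv, map_add, innerSL_apply_apply]
  have hVξ : Vinv (U ξ) = -ξ ↔ V ξ = -(U ξ) := by
    have hVVinv (y : H) : V (Vinv y) = y := DFunLike.congr_fun hVinv.2 y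
    have hVinvV (y : H) : Vinv (V y) = y := DFunLike.congr_fun hVinv.1 y
    constructor <;> intro h
    · rw [← hVVinv (U ξ), h, map_neg, neg_neg]
    · rw [← neg_eq_iff_eq_neg.2 h, map_neg, hVinvV]
  have hinnerV : innerSL ℂ ξ ∘L V = innerSL ℂ (-(U ξ)) ↔ Vinv ξ = -(U ξ) := by
    rw [innerSL_apply_comp, innerSL_inj, hVadj]
  simp only [ext_mkE_iff, hconj, leftInverse_apply_mkE hξ ha2 hA hUU hT hTinv.1]
  rw [forall_smul_mkE_eq_iff (Complex.exp_ne_zero _) ha0, hVξ, hinnerV,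
    Complex.exp_eq_exp_neg_iff]

end
end
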